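/- arXiv:1511.01343 — 5 statements merged into one kernel-verified Lean document; each statement's English description precedes it below -/
import Mathlib

section
/- Let d ≥ 1 and consider the one-factor binary model with parameters ordered so that β_1 ≤ β_2 ≤ … ≤ β_d; set β_0 := 0 and β_{d+1} := 1. Then for every x = (x_1,…,x_d) ∈ {0,1}^d, the joint pmf has the closed form ∫₀¹ ∏_{j=1}^d p_j(u)^{x_j}(1−p_j(u))^{1−x_j} du = Σ_{j=0}^{d} (β_{j+1} − β_j) · f(j), where f(j₀) := ∏_{j=1}^{j₀} ν_j^{x_j}(1−ν_j)^{1−x_j} · ∏_{j=j₀+1}^{d} λ_j^{x_j}(1−λ_j)^{1−x_j} (empty products being 1). -/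
/-!
Pad the thresholds `β 1 ≤ ⋯ ≤ β d`, which lie in `[0, 1]`, with `β 0 = 0` and `β (d + 1) = 1`. On each
open interval `(β i, β (i + 1))` the condition `u < β j` holds exactly for `j > i`, so the
integrand is the constant `f i`; the integral over `[0, 1]` is therefore the sum of these
constants weighted by the interval lengths.
-/

open MeasureTheory Finset

theorem intervalIntegral.integral_eq_sum_of_eqOn_uIoo {b : ℕ → ℝ} {g : ℝ → ℝ} {c : ℕ → ℝ}
    {n : ℕ} (hg : ∀ i < n, Set.EqOn g (fun _ => c i) (Set.uIoo (b i) (b (i + 1)))) :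
    ∫ u in b 0..b n, g u = ∑ i ∈ range n, (b (i + 1) - b i) * c i := by
  have hint : ∀ i < n, IntervalIntegrable g volume (b i) (b (i + 1)) := fun i hi =>
    intervalIntegrable_const.congr_uIoo (hg i hi).symm
  rw [← intervalIntegral.sum_integral_adjacent_intervals hint]
  refine sum_congr rfl fun i hi => ?_
  rw [intervalIntegral.integral_congr_uIoo (hg i (mem_range.1 hi)),
    intervalIntegral.integral_const, smul_eq_mul]

theorem lt_iff_lt_of_mem_Ioo_of_monotoneOn {b : ℕ → ℝ} {m i j : ℕ} {u : ℝ}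
    (hb : MonotoneOn b (Set.Iic m)) (hi : i + 1 ≤ m) (hj : j ≤ m)
    (hu : u ∈ Set.Ioo (b i) (b (i + 1))) : u < b j ↔ i < j := by
  constructor
  · intro huj
    by_contra! hji
    exact (hu.1.trans huj).not_ge (hb hj (Set.mem_Iic.2 (by omega)) hji)
  · intro hij
    exact hu.2.trans_le (hb (Set.mem_Iic.2 hi) hj hij)

theorem prod_Icc_one_ite_lt {M : Type*} [CommMonoid M] (F G : ℕ → M) {i d : ℕ} (hi : i ≤ d) :
    ∏ j ∈ Icc 1 d, (if i < j then F j else G j) =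
      (∏ j ∈ Icc 1 i, G j) * ∏ j ∈ Icc (i + 1) d, F j := by
  rw [Icc_add_one_left_eq_Ioc, show Icc 1 d = Ioc 0 d from Icc_add_one_left_eq_Ioc 0 d,
    show Icc 1 i = Ioc 0 i from Icc_add_one_left_eq_Ioc 0 i,
    ← prod_Ioc_consecutive _ (Nat.zero_le i) hi]
  congr 1 <;> refine prod_congr rfl fun j hj => ?_
  · rw [if_neg (mem_Ioc.1 hj).2.not_gt]
  · rw [if_pos (mem_Ioc.1 hj).1]

theorem monotoneOn_Iic_of_pad_zero_one {β βe : ℕ → ℝ} {d : ℕ}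
    (hβ : ∀ j ∈ Icc 1 d, β j ∈ Set.Icc (0 : ℝ) 1)
    (hmono : ∀ j j', 1 ≤ j → j ≤ j' → j' ≤ d → β j ≤ β j')
    (hβe : ∀ j, βe j = if j = 0 then 0 else if j = d + 1 then 1 else β j) :
    MonotoneOn βe (Set.Iic (d + 1)) := by
  have hmem : ∀ k ≤ d + 1, βe k ∈ Set.Icc (0 : ℝ) 1 := fun k hk => by
    rw [hβe]
    split_ifs with h0 h1
    · simp
    · simp
    · exact hβ k (mem_Icc.2 ⟨by omega, by omega⟩)
  intro j hj j' hj' hjj'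
  rw [Set.mem_Iic] at hj hj'
  by_cases h0 : j = 0
  · rw [h0, hβe 0, if_pos rfl]
    exact (hmem j' hj').1
  by_cases h1 : j' = d + 1
  · rw [h1, hβe (d + 1), if_neg (by omega), if_pos rfl]
    exact (hmem j hj).2
  rw [hβe j, hβe j', if_neg h0, if_neg (by omega), if_neg (by omega), if_neg h1]
  exact hmono j j' (by omega) hjj' (by omega)

theorem explicit_distribution_general (d : ℕ)
    (α δ β lam ν : ℕ → ℝ)
    (hα : ∀ j ∈ Finset.Icc 1 d, α j ∈ Set.Ioo (0:ℝ) 1)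
    (hβ : ∀ j, β j = if δ j = 1 then α j else 1 - α j)
    (hmono : ∀ j j', 1 ≤ j → j ≤ j' → j' ≤ d → β j ≤ β j')
    (x : ℕ → ℕ)
    (βe : ℕ → ℝ)
    (hβe : ∀ j, βe j = if j = 0 then 0 else if j = d + 1 then 1 else β j)
    (f : ℕ → ℝ)
    (hf : ∀ j₀, f j₀ =
      (∏ j ∈ Finset.Icc 1 j₀, (ν j) ^ (x j) * (1 - ν j) ^ (1 - x j)) *
      (∏ j ∈ Finset.Icc (j₀ + 1) d, (lam j) ^ (x j) * (1 - lam j) ^ (1 - x j))) :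
    (∫ u in (0:ℝ)..1, ∏ j ∈ Finset.Icc 1 d,
        ((if u < β j then lam j else ν j) ^ (x j) *
          (1 - (if u < β j then lam j else ν j)) ^ (1 - x j)))
      = ∑ j ∈ Finset.range (d + 1), (βe (j + 1) - βe j) * f j := by
  have hβ_mem : ∀ j ∈ Finset.Icc 1 d, β j ∈ Set.Icc (0 : ℝ) 1 := fun j hj => by
    have := hα j hj
    rw [hβ j]
    split_ifs <;> constructor <;> linarith [this.1, this.2]
  have hβe_mono := monotoneOn_Iic_of_pad_zero_one hβ_mem hmono hβe
  have hpieces := intervalIntegral.integral_eq_sum_of_eqOn_uIoo (b := βe) (n := d + 1)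
    (g := fun u => ∏ j ∈ Finset.Icc 1 d,
      ((if u < β j then lam j else ν j) ^ (x j) * (1 - (if u < β j then lam j else ν j)) ^ (1 - x j)))
    (c := f) fun i hi u hu => by
      rw [Set.uIoo_of_le (hβe_mono (Set.mem_Iic.2 (by omega)) (Set.mem_Iic.2 hi) i.le_succ)] at hu
      have hlt : ∀ j ∈ Finset.Icc 1 d, u < β j ↔ i < j := fun j hj => by
        rw [Finset.mem_Icc] at hj
        have h := lt_iff_lt_of_mem_Ioo_of_monotoneOn hβe_mono hi (j := j) (by omega) hu
        rwa [hβe, if_neg (by omega), if_neg (by omega)] at h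
      rw [hf, ← prod_Icc_one_ite_lt _ _ (Nat.lt_succ_iff.1 hi)]
      refine prod_congr rfl fun j hj => ?_
      simp only [hlt j hj]
      split_ifs <;> rfl
  rwa [hβe 0, hβe (d + 1), if_pos rfl, if_neg d.succ_ne_zero, if_pos rfl] at hpieces

/-- **Explicit distribution (Proposition 1).**
One-factor binary model with `d ≥ 1` variables indexed by `j ∈ {1,…,d}`, parameters
`α j ∈ (0,1)`, `ε j ∈ (0,1)`, `δ j ∈ {0,1}`, reparametrized by
`β j = α j` if `δ j = 1` and `1 - α j` otherwise, `λ j = (1-ε j)α j + ε j δ j`,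
`ν j = (1-ε j)α j + ε j (1-δ j)`, ordered so that `β 1 ≤ … ≤ β d`, and with the
extended sequence `βe` satisfying `βe 0 = 0`, `βe (d+1) = 1`, `βe j = β j` otherwise.
Then for every `x ∈ {0,1}^d`, the joint pmf
`∫₀¹ ∏_j p_j(u)^(x j) (1 - p_j(u))^(1 - x j) du`, with `p_j(u) = λ j` if `u < β j`
and `ν j` otherwise, equals `∑_{j=0}^{d} (βe (j+1) - βe j) ⬝ f j`, where
`f j₀ = ∏_{j=1}^{j₀} ν j^(x j)(1-ν j)^(1-x j) ⬝ ∏_{j=j₀+1}^{d} λ j^(x j)(1-λ j)^(1-x j)`. -/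
theorem explicit_distribution (d : ℕ) (hd : 1 ≤ d)
    (α ε δ β lam ν : ℕ → ℝ)
    (hα : ∀ j ∈ Finset.Icc 1 d, α j ∈ Set.Ioo (0:ℝ) 1)
    (hε : ∀ j ∈ Finset.Icc 1 d, ε j ∈ Set.Ioo (0:ℝ) 1)
    (hδ : ∀ j ∈ Finset.Icc 1 d, δ j = 0 ∨ δ j = 1)
    (hβ : ∀ j, β j = if δ j = 1 then α j else 1 - α j)
    (hlam : ∀ j, lam j = (1 - ε j) * α j + ε j * δ j)
    (hν : ∀ j, ν j = (1 - ε j) * α j + ε j * (1 - δ j))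
    (hmono : ∀ j j', 1 ≤ j → j ≤ j' → j' ≤ d → β j ≤ β j')
    (x : ℕ → ℕ) (hx : ∀ j ∈ Finset.Icc 1 d, x j ≤ 1)
    (βe : ℕ → ℝ)
    (hβe : ∀ j, βe j = if j = 0 then 0 else if j = d + 1 then 1 else β j)
    (f : ℕ → ℝ)
    (hf : ∀ j₀, f j₀ =
      (∏ j ∈ Finset.Icc 1 j₀, (ν j) ^ (x j) * (1 - ν j) ^ (1 - x j)) *
      (∏ j ∈ Finset.Icc (j₀ + 1) d, (lam j) ^ (x j) * (1 - lam j) ^ (1 - x j))) :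
    (∫ u in (0:ℝ)..1, ∏ j ∈ Finset.Icc 1 d,
        ((if u < β j then lam j else ν j) ^ (x j) *
          (1 - (if u < β j then lam j else ν j)) ^ (1 - x j)))
      = ∑ j ∈ Finset.range (d + 1), (βe (j + 1) - βe j) * f j :=
  explicit_distribution_general d α δ β lam ν hα hβ hmono x βe hβe f hf
end

section
/- Identifiability for blocks of size d ≥ 3: let (α_j, ε_j, δ_j)_{j=1,…,d} and (α'_j, ε'_j, δ'_j)_{j=1,…,d} be two parameter vectors of the one-factor binary model with all α_j, α'_j ∈ (0,1), all ε_j, ε'_j ∈ (0,1), δ_j, δ'_j ∈ {0,1}, each ordered so that β_1 ≤ … ≤ β_d and β'_1 ≤ … ≤ β'_d, and satisfying the constraint δ_1 = δ'_1 = 1. If the two parameter vectors induce the same joint pmf, i.e. p(x | α, ε, δ) = p(x | α', ε', δ') for every x ∈ {0,1}^d, then α_j = α'_j, ε_j = ε'_j and δ_j = δ'_j for all j = 1,…,d. -/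
open MeasureTheory

lemma bdd_intInt {f : ℝ → ℝ} (hf : Measurable f) {C : ℝ}
    (hC : ∀ u, |f u| ≤ C) (a b : ℝ) : IntervalIntegrable f volume a b := by
  rw [intervalIntegrable_iff]
  have : IsFiniteMeasure (volume.restrict (Set.uIoc a b)) := by
    constructor
    rw [Measure.restrict_apply_univ, Set.uIoc]
    exact measure_Ioc_lt_top
  constructor
  · exact hf.aestronglyMeasurable.restrict
  · apply MeasureTheory.HasFiniteIntegral.of_bounded (C := C)
    filter_upwards with u
    simpa using hC u

lemma meas_step (b A B : ℝ) : Measurable (fun u : ℝ => if u < b then A else B) := by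
  exact Measurable.ite measurableSet_Iio measurable_const measurable_const

lemma intInt_step (b A B a c : ℝ) :
    IntervalIntegrable (fun u : ℝ => if u < b then A else B) volume a c := by
  apply bdd_intInt (meas_step b A B) (C := max |A| |B|) _ a c
  intro u
  by_cases h : u < b <;> simp [h, le_max_left, le_max_right]

lemma integral_ind (b : ℝ) (h0 : 0 ≤ b) (h1 : b ≤ 1) :
    ∫ u in (0:ℝ)..1, (if u < b then (1:ℝ) else 0) = b := by
  have hi1 := intInt_step b 1 0 0 b
  have hi2 := intInt_step b 1 0 b 1
  have e1 : ∫ u in (0:ℝ)..b, (if u < b then (1:ℝ) else 0) = b := by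
    have hb : ∀ᵐ x : ℝ, x ≠ b := by
      rw [MeasureTheory.ae_iff]
      simpa [not_not, Set.setOf_eq_eq_singleton] using measure_singleton b
    have h : ∫ u in (0:ℝ)..b, (if u < b then (1:ℝ) else 0) = ∫ u in (0:ℝ)..b, (1:ℝ) := by
      apply intervalIntegral.integral_congr_ae
      filter_upwards [hb] with x hx hmem
      rw [Set.uIoc_of_le h0] at hmem
      simp [lt_of_le_of_ne hmem.2 hx]
    rw [h]; simp
  have e2 : ∫ u in b..1, (if u < b then (1:ℝ) else 0) = 0 := by
    have h : ∫ u in b..1, (if u < b then (1:ℝ) else 0) = ∫ u in b..1, (0:ℝ) := by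
      apply intervalIntegral.integral_congr
      intro x hx
      rw [Set.uIcc_of_le h1] at hx
      simp [not_lt.mpr hx.1]
    rw [h]; simp
  rw [← intervalIntegral.integral_add_adjacent_intervals hi1 hi2, e1, e2, add_zero]

lemma integral_step (b A B : ℝ) (h0 : 0 ≤ b) (h1 : b ≤ 1) :
    ∫ u in (0:ℝ)..1, (if u < b then A else B) = B + (A - B) * b := by
  have hfun : (fun u : ℝ => if u < b then A else B)
      = fun u => B + (A - B) * (if u < b then (1:ℝ) else 0) := by
    funext u; by_cases h : u < b <;> simp [h] <;> ring
  rw [hfun, intervalIntegral.integral_add intervalIntegrable_const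
      ((intInt_step b 1 0 0 1).const_mul _),
    intervalIntegral.integral_const, intervalIntegral.integral_const_mul,
    integral_ind b h0 h1]
  simp

lemma integral_two_step (b1 b2 A1 B1 A2 B2 : ℝ) (h01 : 0 ≤ b1) (h11 : b1 ≤ 1)
    (h02 : 0 ≤ b2) (h12 : b2 ≤ 1) :
    ∫ u in (0:ℝ)..1, (if u < b1 then A1 else B1) * (if u < b2 then A2 else B2)
    = B1 * B2 + (A1 - B1) * B2 * b1 + B1 * (A2 - B2) * b2
      + (A1 - B1) * (A2 - B2) * min b1 b2 := by
  have hfun : (fun u : ℝ => (if u < b1 then A1 else B1) * (if u < b2 then A2 else B2))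
      = fun u => B1 * B2 + ((A1 - B1) * B2 * (if u < b1 then (1:ℝ) else 0)
          + (B1 * (A2 - B2) * (if u < b2 then (1:ℝ) else 0)
          + (A1 - B1) * (A2 - B2) * (if u < min b1 b2 then (1:ℝ) else 0))) := by
    funext u
    by_cases h1 : u < b1 <;> by_cases h2 : u < b2 <;>
      simp [h1, h2, lt_min_iff] <;> ring
  have i1 := (intInt_step b1 1 0 0 1).const_mul ((A1 - B1) * B2)
  have i2 := (intInt_step b2 1 0 0 1).const_mul (B1 * (A2 - B2))
  have i3 := (intInt_step (min b1 b2) 1 0 0 1).const_mul ((A1 - B1) * (A2 - B2))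
  rw [hfun, intervalIntegral.integral_add intervalIntegrable_const (i1.add (i2.add i3)),
    intervalIntegral.integral_add i1 (i2.add i3), intervalIntegral.integral_add i2 i3,
    intervalIntegral.integral_const, intervalIntegral.integral_const_mul,
    intervalIntegral.integral_const_mul, intervalIntegral.integral_const_mul,
    integral_ind b1 h01 h11, integral_ind b2 h02 h12,
    integral_ind (min b1 b2) (le_min h01 h02) (min_le_of_left_le h11)]
  simp; ring
open MeasureTheory

lemma prod_pattern (A S : Finset ℕ) (hS : S ⊆ A) (q : ℕ → ℝ) :
    ∑ T ∈ (A \ S).powerset, ∏ j ∈ A,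
      ((q j) ^ (if j ∈ S ∪ T then 1 else 0) *
        (1 - q j) ^ (1 - if j ∈ S ∪ T then 1 else 0))
    = ∏ j ∈ S, q j := by
  have key : ∀ T ∈ (A \ S).powerset, (∏ j ∈ A,
      ((q j) ^ (if j ∈ S ∪ T then 1 else 0) *
        (1 - q j) ^ (1 - if j ∈ S ∪ T then 1 else 0)))
      = (∏ j ∈ S, q j) * ((∏ j ∈ T, q j) * ∏ j ∈ (A \ S) \ T, (1 - q j)) := by
    intro T hT
    rw [Finset.mem_powerset] at hT
    have hTA : T ⊆ A := hT.trans (Finset.sdiff_subset)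
    have hST : Disjoint S T := (Finset.disjoint_of_subset_right hT Finset.disjoint_sdiff)
    have hUA : S ∪ T ⊆ A := Finset.union_subset hS hTA
    have step1 : (∏ j ∈ A,
        ((q j) ^ (if j ∈ S ∪ T then 1 else 0) *
          (1 - q j) ^ (1 - if j ∈ S ∪ T then 1 else 0)))
        = ∏ j ∈ A, (if j ∈ S ∪ T then q j else 1 - q j) := by
      apply Finset.prod_congr rfl
      intro j _
      by_cases h : j ∈ S ∪ T <;> simp [h]
    rw [step1]
    have step2 : (∏ j ∈ A, (if j ∈ S ∪ T then q j else 1 - q j))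
        = (∏ j ∈ A ∩ (S ∪ T), q j) * ∏ j ∈ A \ (S ∪ T), (1 - q j) :=
      Finset.prod_piecewise A (S ∪ T) q (fun j => 1 - q j)
    have hdd : A \ (S ∪ T) = (A \ S) \ T := by
      ext a; simp only [Finset.mem_sdiff, Finset.mem_union]; tauto
    rw [step2, Finset.inter_eq_right.mpr hUA, Finset.prod_union hST, hdd]
    ring
  rw [Finset.sum_congr rfl key, ← Finset.mul_sum]
  have : ∑ T ∈ (A \ S).powerset, ((∏ j ∈ T, q j) * ∏ j ∈ (A \ S) \ T, (1 - q j))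
      = ∏ j ∈ A \ S, (q j + (1 - q j)) := (Finset.prod_add _ _ _).symm
  rw [this]
  simp

lemma bound_pattern (A : Finset ℕ) (q : ℕ → ℝ) (hq : ∀ j ∈ A, 0 ≤ q j ∧ q j ≤ 1)
    (x : ℕ → ℕ) :
    |∏ j ∈ A, ((q j) ^ (x j) * (1 - q j) ^ (1 - x j))| ≤ 1 := by
  rw [Finset.abs_prod]
  apply Finset.prod_le_one
  · intro j _; positivity
  · intro j hj
    obtain ⟨h0, h1⟩ := hq j hj
    rw [abs_mul, abs_pow, abs_pow, abs_of_nonneg h0, abs_of_nonneg (by linarith)]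
    calc q j ^ x j * (1 - q j) ^ (1 - x j)
        ≤ 1 * 1 := by
          apply mul_le_mul (pow_le_one₀ h0 h1) (pow_le_one₀ (by linarith) (by linarith))
            (pow_nonneg (by linarith) _) one_pos.le
      _ = 1 := one_mul 1

lemma expand_moment (A S : Finset ℕ) (hS : S ⊆ A) (p : ℕ → ℝ → ℝ)
    (hmeas : ∀ j, Measurable (p j))
    (hbd : ∀ j ∈ A, ∀ u, 0 ≤ p j u ∧ p j u ≤ 1) :
    ∫ u in (0:ℝ)..1, ∏ j ∈ S, p j u
    = ∑ T ∈ (A \ S).powerset, ∫ u in (0:ℝ)..1, ∏ j ∈ A,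
        ((p j u) ^ (if j ∈ S ∪ T then 1 else 0) *
          (1 - p j u) ^ (1 - if j ∈ S ∪ T then 1 else 0)) := by
  have hint : ∀ T ∈ (A \ S).powerset, IntervalIntegrable
      (fun u => ∏ j ∈ A, ((p j u) ^ (if j ∈ S ∪ T then 1 else 0) *
          (1 - p j u) ^ (1 - if j ∈ S ∪ T then 1 else 0))) volume 0 1 := by
    intro T _
    apply bdd_intInt _ (C := 1) _ 0 1
    · apply Finset.measurable_prod
      intro j _
      exact ((hmeas j).pow_const _).mul ((measurable_const.sub (hmeas j)).pow_const _)
    · intro u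
      exact bound_pattern A (fun j => p j u) (fun j hj => hbd j hj u) _
  rw [← intervalIntegral.integral_finset_sum hint]
  apply intervalIntegral.integral_congr
  intro u _
  exact (prod_pattern A S hS (fun j => p j u)).symm
lemma min_sub_mul_pos {a b : ℝ} (ha0 : 0 < a) (ha1 : a < 1) (hb0 : 0 < b) (hb1 : b < 1) :
    0 < min a b - a * b := by
  rcases le_total a b with h | h
  · rw [min_eq_left h]; nlinarith
  · rw [min_eq_right h]; nlinarith


set_option maxHeartbeats 1600000 in


/-- **Identifiability for blocks of size `d ≥ 3` (Proposition 2, case 3).**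
Two parameter vectors `(α, ε, δ)` and `(α', ε', δ')` of the one-factor binary model,
both with `α, ε ∈ (0,1)`, `δ ∈ {0,1}`, ordered so that `β 1 ≤ … ≤ β d` (and similarly
for `β'`), and satisfying the identifiability constraint `δ 1 = δ' 1 = 1`.
If they induce the same joint pmf on `{0,1}^d`, then the parameters coincide. -/
theorem identifiability_d_ge_three (d : ℕ) (hd : 3 ≤ d)
    (α ε δ β lam ν α' ε' δ' β' lam' ν' : ℕ → ℝ)
    (hα : ∀ j ∈ Finset.Icc 1 d, α j ∈ Set.Ioo (0:ℝ) 1)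
    (hε : ∀ j ∈ Finset.Icc 1 d, ε j ∈ Set.Ioo (0:ℝ) 1)
    (hδ : ∀ j ∈ Finset.Icc 1 d, δ j = 0 ∨ δ j = 1)
    (hα' : ∀ j ∈ Finset.Icc 1 d, α' j ∈ Set.Ioo (0:ℝ) 1)
    (hε' : ∀ j ∈ Finset.Icc 1 d, ε' j ∈ Set.Ioo (0:ℝ) 1)
    (hδ' : ∀ j ∈ Finset.Icc 1 d, δ' j = 0 ∨ δ' j = 1)
    (hβ : ∀ j, β j = if δ j = 1 then α j else 1 - α j)
    (hlam : ∀ j, lam j = (1 - ε j) * α j + ε j * δ j)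
    (hν : ∀ j, ν j = (1 - ε j) * α j + ε j * (1 - δ j))
    (hβ' : ∀ j, β' j = if δ' j = 1 then α' j else 1 - α' j)
    (hlam' : ∀ j, lam' j = (1 - ε' j) * α' j + ε' j * δ' j)
    (hν' : ∀ j, ν' j = (1 - ε' j) * α' j + ε' j * (1 - δ' j))
    (hmono : ∀ j j', 1 ≤ j → j ≤ j' → j' ≤ d → β j ≤ β j')
    (hmono' : ∀ j j', 1 ≤ j → j ≤ j' → j' ≤ d → β' j ≤ β' j')
    (hδ1 : δ 1 = 1) (hδ1' : δ' 1 = 1)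
    (heq : ∀ x : ℕ → ℕ, (∀ j ∈ Finset.Icc 1 d, x j ≤ 1) →
      (∫ u in (0:ℝ)..1, ∏ j ∈ Finset.Icc 1 d,
        ((if u < β j then lam j else ν j) ^ (x j) *
          (1 - (if u < β j then lam j else ν j)) ^ (1 - x j)))
      = (∫ u in (0:ℝ)..1, ∏ j ∈ Finset.Icc 1 d,
        ((if u < β' j then lam' j else ν' j) ^ (x j) *
          (1 - (if u < β' j then lam' j else ν' j)) ^ (1 - x j)))) :
    ∀ j ∈ Finset.Icc 1 d, α j = α' j ∧ ε j = ε' j ∧ δ j = δ' j := by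
  have h1d : (1:ℕ) ∈ Finset.Icc 1 d := by simp; omega
  -- basic facts
  have fact : ∀ j ∈ Finset.Icc 1 d, 0 < β j ∧ β j < 1 ∧ 0 ≤ ν j ∧ ν j ≤ 1 ∧
      0 ≤ lam j ∧ lam j ≤ 1 ∧ ν j + (lam j - ν j) * β j = α j := by
    intro j hj
    obtain ⟨ha1, ha2⟩ := hα j hj
    obtain ⟨he1, he2⟩ := hε j hj
    rcases hδ j hj with h | h <;>
      refine ⟨?_, ?_, ?_, ?_, ?_, ?_, ?_⟩ <;>
      simp [hβ j, hlam j, hν j, h] <;> nlinarith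
  have fact' : ∀ j ∈ Finset.Icc 1 d, 0 < β' j ∧ β' j < 1 ∧ 0 ≤ ν' j ∧ ν' j ≤ 1 ∧
      0 ≤ lam' j ∧ lam' j ≤ 1 ∧ ν' j + (lam' j - ν' j) * β' j = α' j := by
    intro j hj
    obtain ⟨ha1, ha2⟩ := hα' j hj
    obtain ⟨he1, he2⟩ := hε' j hj
    rcases hδ' j hj with h | h <;>
      refine ⟨?_, ?_, ?_, ?_, ?_, ?_, ?_⟩ <;>
      simp [hβ' j, hlam' j, hν' j, h] <;> nlinarith
  have hbdp : ∀ j ∈ Finset.Icc 1 d, ∀ u : ℝ,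
      0 ≤ (if u < β j then lam j else ν j) ∧ (if u < β j then lam j else ν j) ≤ 1 := by
    intro j hj u
    obtain ⟨_, _, h1, h2, h3, h4, _⟩ := fact j hj
    by_cases h : u < β j <;> simp [h] <;> constructor <;> linarith
  have hbdp' : ∀ j ∈ Finset.Icc 1 d, ∀ u : ℝ,
      0 ≤ (if u < β' j then lam' j else ν' j) ∧ (if u < β' j then lam' j else ν' j) ≤ 1 := by
    intro j hj u
    obtain ⟨_, _, h1, h2, h3, h4, _⟩ := fact' j hj
    by_cases h : u < β' j <;> simp [h] <;> constructor <;> linarith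
  -- key moment identity
  have Mkey : ∀ S ⊆ Finset.Icc 1 d,
      (∫ u in (0:ℝ)..1, ∏ j ∈ S, (if u < β j then lam j else ν j))
      = ∫ u in (0:ℝ)..1, ∏ j ∈ S, (if u < β' j then lam' j else ν' j) := by
    intro S hS
    rw [expand_moment (Finset.Icc 1 d) S hS (fun j u => if u < β j then lam j else ν j)
        (fun j => meas_step _ _ _) hbdp,
      expand_moment (Finset.Icc 1 d) S hS (fun j u => if u < β' j then lam' j else ν' j)
        (fun j => meas_step _ _ _) hbdp']
    apply Finset.sum_congr rfl
    intro T hT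
    exact heq (fun j => if j ∈ S ∪ T then 1 else 0)
      (fun j _ => by by_cases h : j ∈ S ∪ T <;> simp [h])
  -- first moments
  have M1 : ∀ j ∈ Finset.Icc 1 d, α j = α' j := by
    intro j hj
    have h := Mkey {j} (by simpa using hj)
    simp only [Finset.prod_singleton] at h
    obtain ⟨hb0, hb1, _, _, _, _, hint1⟩ := fact j hj
    obtain ⟨hb0', hb1', _, _, _, _, hint1'⟩ := fact' j hj
    rw [integral_step (β j) (lam j) (ν j) hb0.le hb1.le,
      integral_step (β' j) (lam' j) (ν' j) hb0'.le hb1'.le] at h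
    linarith
  -- second moments
  have M2 : ∀ j ∈ Finset.Icc 1 d, ∀ k ∈ Finset.Icc 1 d, j ≠ k →
      (lam j - ν j) * (lam k - ν k) * (min (β j) (β k) - β j * β k)
      = (lam' j - ν' j) * (lam' k - ν' k) * (min (β' j) (β' k) - β' j * β' k) := by
    intro j hj k hk hjk
    have h := Mkey {j, k} (by simp [Finset.insert_subset_iff, hj, hk])
    simp only [Finset.prod_pair hjk] at h
    obtain ⟨hb0, hb1, _, _, _, _, hint1⟩ := fact j hj
    obtain ⟨hc0, hc1, _, _, _, _, hint2⟩ := fact k hk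
    obtain ⟨hb0', hb1', _, _, _, _, hint1'⟩ := fact' j hj
    obtain ⟨hc0', hc1', _, _, _, _, hint2'⟩ := fact' k hk
    rw [integral_two_step (β j) (β k) (lam j) (ν j) (lam k) (ν k) hb0.le hb1.le hc0.le hc1.le,
      integral_two_step (β' j) (β' k) (lam' j) (ν' j) (lam' k) (ν' k)
        hb0'.le hb1'.le hc0'.le hc1'.le] at h
    have ejk : ν j * ν k + (lam j - ν j) * ν k * β j + ν j * (lam k - ν k) * β k
        + (lam j - ν j) * (lam k - ν k) * (β j * β k) = α j * α k := by
      rw [← hint1, ← hint2]; ring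
    have ejk' : ν' j * ν' k + (lam' j - ν' j) * ν' k * β' j + ν' j * (lam' k - ν' k) * β' k
        + (lam' j - ν' j) * (lam' k - ν' k) * (β' j * β' k) = α' j * α' k := by
      rw [← hint1', ← hint2']; ring
    have hae : α j * α k = α' j * α' k := by rw [M1 j hj, M1 k hk]
    linear_combination h - ejk + ejk' - hae
  -- sign/value of lam - ν
  have he : ∀ j, δ j = 1 → lam j - ν j = ε j := by
    intro j h; rw [hlam j, hν j, h]; ring
  have he0 : ∀ j, δ j = 0 → lam j - ν j = -ε j := by
    intro j h; rw [hlam j, hν j, h]; ring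
  have he' : ∀ j, δ' j = 1 → lam' j - ν' j = ε' j := by
    intro j h; rw [hlam' j, hν' j, h]; ring
  have he0' : ∀ j, δ' j = 0 → lam' j - ν' j = -ε' j := by
    intro j h; rw [hlam' j, hν' j, h]; ring
  -- δ identification
  have hδeq : ∀ j ∈ Finset.Icc 1 d, δ j = δ' j := by
    intro j hj
    by_cases hj1 : j = 1
    · rw [hj1, hδ1, hδ1']
    · have hpair := M2 1 h1d j hj (fun h => hj1 h.symm)
      obtain ⟨hb0, hb1, _⟩ := fact 1 h1d
      obtain ⟨hc0, hc1, _⟩ := fact j hj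
      obtain ⟨hb0', hb1', _⟩ := fact' 1 h1d
      obtain ⟨hc0', hc1', _⟩ := fact' j hj
      have G := min_sub_mul_pos hb0 hb1 hc0 hc1
      have G' := min_sub_mul_pos hb0' hb1' hc0' hc1'
      obtain ⟨hε1a, _⟩ := hε 1 h1d
      obtain ⟨hεja, _⟩ := hε j hj
      obtain ⟨hε1a', _⟩ := hε' 1 h1d
      obtain ⟨hεja', _⟩ := hε' j hj
      rw [he 1 hδ1, he' 1 hδ1'] at hpair
      rcases hδ j hj with h0 | h1c <;> rcases hδ' j hj with h0' | h1c'
      · rw [h0, h0']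
      · exfalso
        rw [he0 j h0, he' j h1c'] at hpair
        have hP := mul_pos (mul_pos hε1a hεja) G
        have hQ := mul_pos (mul_pos hε1a' hεja') G'
        have hR : ε 1 * ε j * (min (β 1) (β j) - β 1 * β j)
            = -(ε' 1 * ε' j * (min (β' 1) (β' j) - β' 1 * β' j)) := by
          linear_combination -hpair
        linarith
      · exfalso
        rw [he j h1c, he0' j h0'] at hpair
        have hP := mul_pos (mul_pos hε1a hεja) G
        have hQ := mul_pos (mul_pos hε1a' hεja') G'
        have hR : ε 1 * ε j * (min (β 1) (β j) - β 1 * β j)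
            = -(ε' 1 * ε' j * (min (β' 1) (β' j) - β' 1 * β' j)) := by
          linear_combination hpair
        linarith
      · rw [h1c, h1c']
  -- β identification
  have hβeq : ∀ j ∈ Finset.Icc 1 d, β j = β' j := by
    intro j hj
    rw [hβ j, hβ' j, hδeq j hj, M1 j hj]
  -- ε products
  have hee : ∀ j ∈ Finset.Icc 1 d, ∀ k ∈ Finset.Icc 1 d, j ≠ k →
      ε j * ε k = ε' j * ε' k := by
    intro j hj k hk hjk
    have hpair := M2 j hj k hk hjk
    rw [← hβeq j hj, ← hβeq k hk] at hpair
    obtain ⟨hb0, hb1, _⟩ := fact j hj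
    obtain ⟨hc0, hc1, _⟩ := fact k hk
    have G := min_sub_mul_pos hb0 hb1 hc0 hc1
    have hcan : (lam j - ν j) * (lam k - ν k) = (lam' j - ν' j) * (lam' k - ν' k) :=
      mul_right_cancel₀ (ne_of_gt G) hpair
    have hδj' := hδeq j hj
    have hδk' := hδeq k hk
    rcases hδ j hj with h0 | h1 <;> rcases hδ k hk with g0 | g1
    · rw [he0 j h0, he0 k g0, he0' j (hδj' ▸ h0), he0' k (hδk' ▸ g0)] at hcan
      linear_combination hcan
    · rw [he0 j h0, he k g1, he0' j (hδj' ▸ h0), he' k (hδk' ▸ g1)] at hcan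
      linear_combination -hcan
    · rw [he j h1, he0 k g0, he' j (hδj' ▸ h1), he0' k (hδk' ▸ g0)] at hcan
      linear_combination -hcan
    · rw [he j h1, he k g1, he' j (hδj' ▸ h1), he' k (hδk' ▸ g1)] at hcan
      linear_combination hcan
  -- conclusion
  intro j hj
  refine ⟨M1 j hj, ?_, hδeq j hj⟩
  obtain ⟨k, l, hkA, hlA, hkj, hlj, hkl⟩ : ∃ k l, k ∈ Finset.Icc 1 d ∧ l ∈ Finset.Icc 1 d ∧
      k ≠ j ∧ l ≠ j ∧ k ≠ l := by
    by_cases e1 : j = 1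
    · exact ⟨2, 3, by simp; omega, by simp; omega, by omega, by omega, by omega⟩
    · by_cases e2 : j = 2
      · exact ⟨1, 3, h1d, by simp; omega, by omega, by omega, by omega⟩
      · exact ⟨1, 2, h1d, by simp; omega, by omega, by omega, by omega⟩
  have P1 := hee j hj k hkA (Ne.symm hkj)
  have P2 := hee j hj l hlA (Ne.symm hlj)
  have P3 := hee k hkA l hlA hkl
  obtain ⟨hej, _⟩ := hε j hj
  obtain ⟨hek, _⟩ := hε k hkA
  obtain ⟨hel, _⟩ := hε l hlA
  obtain ⟨hej', _⟩ := hε' j hj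
  have h2 : ε j ^ 2 * (ε k * ε l) = ε' j ^ 2 * (ε k * ε l) := by
    calc ε j ^ 2 * (ε k * ε l) = (ε j * ε k) * (ε j * ε l) := by ring
    _ = (ε' j * ε' k) * (ε' j * ε' l) := by rw [P1, P2]
    _ = ε' j ^ 2 * (ε' k * ε' l) := by ring
    _ = ε' j ^ 2 * (ε k * ε l) := by rw [P3]
  have h3 : ε j ^ 2 = ε' j ^ 2 := mul_right_cancel₀ (mul_pos hek hel).ne' h2
  have h4 : (ε j - ε' j) * (ε j + ε' j) = 0 := by linear_combination h3
  rcases mul_eq_zero.mp h4 with h5 | h5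
  · linarith
  · linarith
end

section
/- Identifiability for blocks of size d = 2: let (α_1, α_2, ε_1, ε_2, δ_1, δ_2) and (α'_1, α'_2, ε'_1, ε'_2, δ'_1, δ'_2) be two parameter vectors of the one-factor binary model with two variables, with all α's in (0,1), all ε's in (0,1), each ordered so that β_1 ≤ β_2 and β'_1 ≤ β'_2, and satisfying the constraints δ_1 = δ'_1 = 1, ε_1 = ε_2 and ε'_1 = ε'_2. If the two parameter vectors induce the same joint pmf on {0,1}², then α_1 = α'_1, α_2 = α'_2, ε_1 = ε'_1, ε_2 = ε'_2 and δ_2 = δ'_2. -/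
/-!
Given the latent `u`, the two variables are independent Bernoulli variables with step-function
success probabilities, so every cell of the pmf is a polynomial in the parameters. Whatever `δⱼ`,
the marginal `P(xⱼ = 1)` equals `αⱼ`, which identifies the `α`'s. With `δ₁ = 1` and
`ε₁ = ε₂ = ε`, the cell `(1,1)` equals `α₁α₂ + ε²α₁(δ₂ - α₂)`; as `δ₂ - α₂` is positive for
`δ₂ = 1` and negative for `δ₂ = 0`, its sign recovers `δ₂` and then its size recovers `ε`.
-/

open MeasureTheory Set intervalIntegral

section StepFunction

variable {a b c d : ℝ}

theorem intervalIntegrable_ite_lt (A B : ℝ) (hca : c ≤ a) (had : a ≤ d) :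
    IntervalIntegrable (fun u => if u < a then A else B) volume c d := by
  have left : EqOn (fun _ => A) (fun u => if u < a then A else B) (uIoo c a) :=
    fun u hu => (if_pos (uIoo_of_le hca ▸ hu).2).symm
  have right : EqOn (fun _ => B) (fun u => if u < a then A else B) (uIoo a d) :=
    fun u hu => (if_neg (uIoo_of_le had ▸ hu).1.not_gt).symm
  exact (intervalIntegrable_const.congr_uIoo left).trans (intervalIntegrable_const.congr_uIoo right)

theorem integral_ite_lt (A B : ℝ) (hca : c ≤ a) (had : a ≤ d) :
    ∫ u in c..d, (if u < a then A else B) = (a - c) * A + (d - a) * B := by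
  have left : EqOn (fun _ => A) (fun u => if u < a then A else B) (Ioo c a) :=
    fun u hu => (if_pos hu.2).symm
  have right : EqOn (fun _ => B) (fun u => if u < a then A else B) (Ioo a d) :=
    fun u hu => (if_neg hu.1.not_gt).symm
  rw [← integral_add_adjacent_intervals (intervalIntegrable_ite_lt A B hca le_rfl)
      (intervalIntegrable_ite_lt A B le_rfl had), ← integral_congr_Ioo_of_le hca left,
    ← integral_congr_Ioo_of_le had right]
  simp

theorem integral_ite_lt_mul_ite_lt (A B C D : ℝ) (hca : c ≤ a) (hab : a ≤ b) (hbd : b ≤ d) :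
    ∫ u in c..d, (if u < a then A else B) * (if u < b then C else D) =
      (a - c) * (A * C) + (b - a) * (B * C) + (d - b) * (B * D) := by
  have split : (fun u => (if u < a then A else B) * (if u < b then C else D)) =
      fun u => (if u < a then (A - B) * C else 0) + (if u < b then B * C else B * D) := by
    ext u
    by_cases hua : u < a
    · simp only [hua, hua.trans_le hab, if_true]
      ring
    · simp [hua]
  rw [split, integral_add (intervalIntegrable_ite_lt _ _ hca (hab.trans hbd))
      (intervalIntegrable_ite_lt _ _ (hca.trans hab) hbd),
    integral_ite_lt _ _ hca (hab.trans hbd), integral_ite_lt _ _ (hca.trans hab) hbd]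
  ring

end StepFunction

def bernoulliMass (p : ℝ) (x : ℕ) : ℝ := p ^ x * (1 - p) ^ (1 - x)

@[simp] theorem bernoulliMass_one (p : ℝ) : bernoulliMass p 1 = p := by simp [bernoulliMass]
@[simp] theorem bernoulliMass_zero (p : ℝ) : bernoulliMass p 0 = 1 - p := by simp [bernoulliMass]

noncomputable def twoStepPmf (β₁ β₂ l₁ l₂ n₁ n₂ : ℝ) (x₁ x₂ : ℕ) : ℝ :=
  ∫ u in (0:ℝ)..1, bernoulliMass (if u < β₁ then l₁ else n₁) x₁ *
    bernoulliMass (if u < β₂ then l₂ else n₂) x₂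

theorem twoStepPmf_eq {β₁ β₂ : ℝ} (l₁ l₂ n₁ n₂ : ℝ) (h₀ : 0 ≤ β₁) (h₁₂ : β₁ ≤ β₂) (h₁ : β₂ ≤ 1)
    (x₁ x₂ : ℕ) :
    twoStepPmf β₁ β₂ l₁ l₂ n₁ n₂ x₁ x₂ =
      β₁ * (bernoulliMass l₁ x₁ * bernoulliMass l₂ x₂) +
        (β₂ - β₁) * (bernoulliMass n₁ x₁ * bernoulliMass l₂ x₂) +
        (1 - β₂) * (bernoulliMass n₁ x₁ * bernoulliMass n₂ x₂) := by
  simp only [twoStepPmf, apply_ite (bernoulliMass · x₁), apply_ite (bernoulliMass · x₂)]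
  rw [integral_ite_lt_mul_ite_lt _ _ _ _ h₀ h₁₂ h₁, sub_zero]

section ModelVariable

variable {α ε δ β l n : ℝ}

theorem threshold_mem_Icc (hα : α ∈ Icc 0 1) (hβ : β = if δ = 1 then α else 1 - α) :
    β ∈ Icc 0 1 := by
  obtain ⟨h0, h1⟩ := hα
  split_ifs at hβ <;> subst hβ <;> constructor <;> linarith

theorem threshold_mul_add_one_sub_mul_eq (hδ : δ = 0 ∨ δ = 1)
    (hβ : β = if δ = 1 then α else 1 - α)
    (hl : l = (1 - ε) * α + ε * δ) (hn : n = (1 - ε) * α + ε * (1 - δ)) :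
    β * l + (1 - β) * n = α := by
  rcases hδ with rfl | rfl <;> norm_num at hβ <;> subst hβ hl hn <;> ring

end ModelVariable

theorem eq_of_sq_mul_sub_eq {ε ε' α δ δ' : ℝ} (hε : 0 < ε) (hε' : 0 < ε') (hα : α ∈ Ioo 0 1)
    (hδ : δ = 0 ∨ δ = 1) (hδ' : δ' = 0 ∨ δ' = 1) (h : ε ^ 2 * (δ - α) = ε' ^ 2 * (δ' - α)) :
    ε = ε' ∧ δ = δ' := by
  obtain ⟨hα0, hα1⟩ := hα
  have hsq : 0 < ε ^ 2 := by positivity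
  have hsq' : 0 < ε' ^ 2 := by positivity
  obtain rfl : δ = δ' := by
    rcases hδ with rfl | rfl <;> rcases hδ' with rfl | rfl <;> first | rfl | nlinarith
  have hne : δ - α ≠ 0 := by rcases hδ with rfl | rfl <;> linarith
  exact ⟨(pow_left_inj₀ hε.le hε'.le two_ne_zero).1 (mul_right_cancel₀ hne h), rfl⟩

theorem identifiability_d_eq_two_general
    (α1 α2 ε1 ε2 δ1 δ2 β1 β2 lam1 lam2 ν1 ν2 : ℝ)
    (α1' α2' ε1' ε2' δ1' δ2' β1' β2' lam1' lam2' ν1' ν2' : ℝ)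
    (hα1 : α1 ∈ Set.Ioo (0:ℝ) 1) (hα2 : α2 ∈ Set.Ioo (0:ℝ) 1)
    (hε1 : ε1 ∈ Set.Ioo (0:ℝ) 1)
    (hδ2 : δ2 = 0 ∨ δ2 = 1)
    (hα1' : α1' ∈ Set.Ioo (0:ℝ) 1) (hα2' : α2' ∈ Set.Ioo (0:ℝ) 1)
    (hε1' : ε1' ∈ Set.Ioo (0:ℝ) 1)
    (hδ2' : δ2' = 0 ∨ δ2' = 1)
    (hβ1 : β1 = if δ1 = 1 then α1 else 1 - α1)
    (hβ2 : β2 = if δ2 = 1 then α2 else 1 - α2)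
    (hβ1' : β1' = if δ1' = 1 then α1' else 1 - α1')
    (hβ2' : β2' = if δ2' = 1 then α2' else 1 - α2')
    (hlam1 : lam1 = (1 - ε1) * α1 + ε1 * δ1) (hν1 : ν1 = (1 - ε1) * α1 + ε1 * (1 - δ1))
    (hlam2 : lam2 = (1 - ε2) * α2 + ε2 * δ2) (hν2 : ν2 = (1 - ε2) * α2 + ε2 * (1 - δ2))
    (hlam1' : lam1' = (1 - ε1') * α1' + ε1' * δ1')
    (hν1' : ν1' = (1 - ε1') * α1' + ε1' * (1 - δ1'))
    (hlam2' : lam2' = (1 - ε2') * α2' + ε2' * δ2')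
    (hν2' : ν2' = (1 - ε2') * α2' + ε2' * (1 - δ2'))
    (hord : β1 ≤ β2) (hord' : β1' ≤ β2')
    (hδ1 : δ1 = 1) (hδ1' : δ1' = 1)
    (hconstr : ε1 = ε2) (hconstr' : ε1' = ε2')
    (heq : ∀ x1 x2 : ℕ, x1 ≤ 1 → x2 ≤ 1 →
      (∫ u in (0:ℝ)..1,
        ((if u < β1 then lam1 else ν1) ^ x1 *
          (1 - (if u < β1 then lam1 else ν1)) ^ (1 - x1)) *
        ((if u < β2 then lam2 else ν2) ^ x2 *
          (1 - (if u < β2 then lam2 else ν2)) ^ (1 - x2)))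
      = (∫ u in (0:ℝ)..1,
        ((if u < β1' then lam1' else ν1') ^ x1 *
          (1 - (if u < β1' then lam1' else ν1')) ^ (1 - x1)) *
        ((if u < β2' then lam2' else ν2') ^ x2 *
          (1 - (if u < β2' then lam2' else ν2')) ^ (1 - x2)))) :
    α1 = α1' ∧ α2 = α2' ∧ ε1 = ε1' ∧ ε2 = ε2' ∧ δ2 = δ2' := by
  have hm2 := threshold_mul_add_one_sub_mul_eq hδ2 hβ2 hlam2 hν2
  have hm2' := threshold_mul_add_one_sub_mul_eq hδ2' hβ2' hlam2' hν2'
  have hβ2_le := (threshold_mem_Icc (Ioo_subset_Icc_self hα2) hβ2).2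
  have hβ2_le' := (threshold_mem_Icc (Ioo_subset_Icc_self hα2') hβ2').2
  have hpmf : ∀ x₁ x₂ : ℕ, x₁ ≤ 1 → x₂ ≤ 1 → twoStepPmf β1 β2 lam1 lam2 ν1 ν2 x₁ x₂ =
      twoStepPmf β1' β2' lam1' lam2' ν1' ν2' x₁ x₂ := heq
  subst δ1 δ1' ε2 ε2'
  rw [if_pos rfl] at hβ1 hβ1'
  subst β1 β1' lam1 ν1 lam1' ν1' lam2 lam2'
  have h11 := hpmf 1 1 le_rfl le_rfl
  have h10 := hpmf 1 0 le_rfl zero_le_one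
  have h01 := hpmf 0 1 zero_le_one le_rfl
  rw [twoStepPmf_eq _ _ _ _ hα1.1.le hord hβ2_le, twoStepPmf_eq _ _ _ _ hα1'.1.le hord' hβ2_le']
    at h11 h10 h01
  simp only [bernoulliMass_one, bernoulliMass_zero] at h11 h10 h01
  obtain rfl : α1 = α1' := by linear_combination h11 + h10
  obtain rfl : α2 = α2' := by linear_combination h11 + h01 - hm2 + hm2'
  have hcov : ε1 ^ 2 * (δ2 - α2) = ε1' ^ 2 * (δ2' - α2) :=
    mul_left_cancel₀ hα1.1.ne'
      (by linear_combination h11 - (1 - ε1) * α1 * hm2 + (1 - ε1') * α1 * hm2')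
  obtain ⟨rfl, rfl⟩ := eq_of_sq_mul_sub_eq hε1.1 hε1'.1 hα2 hδ2 hδ2' hcov
  exact ⟨rfl, rfl, rfl, rfl, rfl⟩

/-- **Identifiability for blocks of size `d = 2` (Proposition 2, case 2).**
Two parameter vectors `(α₁,α₂,ε₁,ε₂,δ₁,δ₂)` and `(α₁',α₂',ε₁',ε₂',δ₁',δ₂')` of the
two-variable one-factor binary model, with `α, ε ∈ (0,1)`, `δ ∈ {0,1}`, ordered so
that `β₁ ≤ β₂` and `β₁' ≤ β₂'`, and satisfying the identifiability constraints
`δ₁ = δ₁' = 1`, `ε₁ = ε₂` and `ε₁' = ε₂'`.  If they induce the same joint pmf on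
`{0,1}²`, then the parameters coincide. -/
theorem identifiability_d_eq_two
    (α1 α2 ε1 ε2 δ1 δ2 β1 β2 lam1 lam2 ν1 ν2 : ℝ)
    (α1' α2' ε1' ε2' δ1' δ2' β1' β2' lam1' lam2' ν1' ν2' : ℝ)
    (hα1 : α1 ∈ Set.Ioo (0:ℝ) 1) (hα2 : α2 ∈ Set.Ioo (0:ℝ) 1)
    (hε1 : ε1 ∈ Set.Ioo (0:ℝ) 1) (hε2 : ε2 ∈ Set.Ioo (0:ℝ) 1)
    (hδ2 : δ2 = 0 ∨ δ2 = 1)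
    (hα1' : α1' ∈ Set.Ioo (0:ℝ) 1) (hα2' : α2' ∈ Set.Ioo (0:ℝ) 1)
    (hε1' : ε1' ∈ Set.Ioo (0:ℝ) 1) (hε2' : ε2' ∈ Set.Ioo (0:ℝ) 1)
    (hδ2' : δ2' = 0 ∨ δ2' = 1)
    (hβ1 : β1 = if δ1 = 1 then α1 else 1 - α1)
    (hβ2 : β2 = if δ2 = 1 then α2 else 1 - α2)
    (hβ1' : β1' = if δ1' = 1 then α1' else 1 - α1')
    (hβ2' : β2' = if δ2' = 1 then α2' else 1 - α2')
    (hlam1 : lam1 = (1 - ε1) * α1 + ε1 * δ1) (hν1 : ν1 = (1 - ε1) * α1 + ε1 * (1 - δ1))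
    (hlam2 : lam2 = (1 - ε2) * α2 + ε2 * δ2) (hν2 : ν2 = (1 - ε2) * α2 + ε2 * (1 - δ2))
    (hlam1' : lam1' = (1 - ε1') * α1' + ε1' * δ1')
    (hν1' : ν1' = (1 - ε1') * α1' + ε1' * (1 - δ1'))
    (hlam2' : lam2' = (1 - ε2') * α2' + ε2' * δ2')
    (hν2' : ν2' = (1 - ε2') * α2' + ε2' * (1 - δ2'))
    (hord : β1 ≤ β2) (hord' : β1' ≤ β2')
    (hδ1 : δ1 = 1) (hδ1' : δ1' = 1)
    (hconstr : ε1 = ε2) (hconstr' : ε1' = ε2')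
    (heq : ∀ x1 x2 : ℕ, x1 ≤ 1 → x2 ≤ 1 →
      (∫ u in (0:ℝ)..1,
        ((if u < β1 then lam1 else ν1) ^ x1 *
          (1 - (if u < β1 then lam1 else ν1)) ^ (1 - x1)) *
        ((if u < β2 then lam2 else ν2) ^ x2 *
          (1 - (if u < β2 then lam2 else ν2)) ^ (1 - x2)))
      = (∫ u in (0:ℝ)..1,
        ((if u < β1' then lam1' else ν1') ^ x1 *
          (1 - (if u < β1' then lam1' else ν1')) ^ (1 - x1)) *
        ((if u < β2' then lam2' else ν2') ^ x2 *
          (1 - (if u < β2' then lam2' else ν2')) ^ (1 - x2)))) :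
    α1 = α1' ∧ α2 = α2' ∧ ε1 = ε1' ∧ ε2 = ε2' ∧ δ2 = δ2' :=
  identifiability_d_eq_two_general α1 α2 ε1 ε2 δ1 δ2 β1 β2 lam1 lam2 ν1 ν2 α1' α2' ε1' ε2' δ1' δ2'
    β1' β2' lam1' lam2' ν1' ν2' hα1 hα2 hε1 hδ2 hα1' hα2' hε1' hδ2' hβ1 hβ2 hβ1' hβ2' hlam1 hν1
    hlam2 hν2 hlam1' hν1' hlam2' hν2' hord hord' hδ1 hδ1' hconstr hconstr' heq
end

section
/- Bivariate joint probabilities: consider two variables j and j' of the same block of the one-factor binary model with β_j ≤ β_{j'}, and define p_{hh'} := ∫₀¹ p_j(u)^h(1−p_j(u))^{1−h} · p_{j'}(u)^{h'}(1−p_{j'}(u))^{1−h'} du for h, h' ∈ {0,1}. Let r := s·ε_j ε_{j'} β_j (1−β_{j'}), where s = +1 if δ_j = δ_{j'} and s = −1 if δ_j ≠ δ_{j'}. Then p_{11} = α_j α_{j'} + r, p_{01} = (1−α_j)α_{j'} − r, p_{10} = α_j(1−α_{j'}) − r, and p_{00} = (1−α_j)(1−α_{j'}) + r. -/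
/-!
Given the latent `u`, both variables are step functions of `u` with jumps at `β₁ ≤ β₂`, so each
`p h h'` is a sum over the three intervals `[0, β₁)`, `[β₁, β₂)`, `[β₂, 1]`. The marginal
probabilities are `α_j = β_j λ_j + (1 - β_j) ν_j`, and for such comonotone step functions
`p 1 1 - α₁ α₂ = β₁ (1 - β₂) (λ₁ - ν₁) (λ₂ - ν₂)`; finally `λ_j - ν_j = ε_j (2 δ_j - 1)`,
which gives the sign `s`. The other three probabilities follow by linearity.
-/

open MeasureTheory Set

section PiecewiseConstant

variable {f : ℝ → ℝ} {s t c : ℝ}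

lemma intervalIntegrable_of_eqOn_Ioo (hst : s ≤ t) (h : EqOn f (fun _ => c) (Ioo s t)) :
    IntervalIntegrable f volume s t :=
  (intervalIntegrable_congr_uIoo (uIoo_of_le hst ▸ h)).mpr intervalIntegrable_const

lemma integral_eq_of_eqOn_Ioo (hst : s ≤ t) (h : EqOn f (fun _ => c) (Ioo s t)) :
    ∫ u in s..t, f u = (t - s) * c := by
  rw [intervalIntegral.integral_congr_Ioo_of_le hst h, intervalIntegral.integral_const,
    smul_eq_mul]

lemma integral_ite_lt_mul_ite_lt_s7 {a b : ℝ} (ha : 0 ≤ a) (hab : a ≤ b) (hb : b ≤ 1)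
    (x y z w : ℝ) :
    ∫ u in (0:ℝ)..1, (if u < a then x else y) * (if u < b then z else w)
      = a * (x * z) + (b - a) * (y * z) + (1 - b) * (y * w) := by
  set F : ℝ → ℝ := fun u => (if u < a then x else y) * (if u < b then z else w)
  have h₀ : EqOn F (fun _ => x * z) (Ioo 0 a) := fun u hu => by
    simp only [F, if_pos hu.2, if_pos (hu.2.trans_le hab)]
  have h₁ : EqOn F (fun _ => y * z) (Ioo a b) := fun u hu => by
    simp only [F, if_neg hu.1.not_gt, if_pos hu.2]
  have h₂ : EqOn F (fun _ => y * w) (Ioo b 1) := fun u hu => by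
    simp only [F, if_neg (hab.trans_lt hu.1).not_gt, if_neg hu.1.not_gt]
  rw [← intervalIntegral.integral_add_adjacent_intervals (intervalIntegrable_of_eqOn_Ioo ha h₀)
      ((intervalIntegrable_of_eqOn_Ioo hab h₁).trans (intervalIntegrable_of_eqOn_Ioo hb h₂)),
    ← intervalIntegral.integral_add_adjacent_intervals (intervalIntegrable_of_eqOn_Ioo hab h₁)
      (intervalIntegrable_of_eqOn_Ioo hb h₂),
    integral_eq_of_eqOn_Ioo ha h₀, integral_eq_of_eqOn_Ioo hab h₁, integral_eq_of_eqOn_Ioo hb h₂,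
    sub_zero, add_assoc]

end PiecewiseConstant

namespace OneFactorBinary

/-- The paper's `β`, `λ`, `ν`: given the latent `u ~ U[0, 1]`, the variable is `1` with
probability `lowerProb` when `u < threshold` and `upperProb` otherwise. -/
noncomputable def threshold (α δ : ℝ) : ℝ := if δ = 1 then α else 1 - α

def lowerProb (α ε δ : ℝ) : ℝ := (1 - ε) * α + ε * δ

def upperProb (α ε δ : ℝ) : ℝ := (1 - ε) * α + ε * (1 - δ)

lemma threshold_mem_Icc {α : ℝ} (δ : ℝ) (hα : α ∈ Icc 0 1) : threshold α δ ∈ Icc 0 1 := by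
  unfold threshold
  split_ifs
  · exact hα
  · exact ⟨sub_nonneg.mpr hα.2, sub_le_self 1 hα.1⟩

lemma threshold_mul_lowerProb_add_mul_upperProb (α ε : ℝ) {δ : ℝ} (hδ : δ = 0 ∨ δ = 1) :
    threshold α δ * lowerProb α ε δ + (1 - threshold α δ) * upperProb α ε δ = α := by
  rcases hδ with rfl | rfl <;> simp only [threshold, lowerProb, upperProb] <;> norm_num <;> ring

lemma two_mul_sub_one_mul_two_mul_sub_one {δ₁ δ₂ : ℝ} (hδ₁ : δ₁ = 0 ∨ δ₁ = 1)
    (hδ₂ : δ₂ = 0 ∨ δ₂ = 1) :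
    (2 * δ₁ - 1) * (2 * δ₂ - 1) = if δ₁ = δ₂ then 1 else -1 := by
  rcases hδ₁ with rfl | rfl <;> rcases hδ₂ with rfl | rfl <;> norm_num

end OneFactorBinary

open OneFactorBinary

theorem bivariate_joint_probabilities_general
    (α1 ε1 δ1 α2 ε2 δ2 β1 β2 lam1 ν1 lam2 ν2 r : ℝ)
    (hα1 : α1 ∈ Set.Ioo (0:ℝ) 1) (hα2 : α2 ∈ Set.Ioo (0:ℝ) 1)
    (hδ1 : δ1 = 0 ∨ δ1 = 1) (hδ2 : δ2 = 0 ∨ δ2 = 1)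
    (hβ1 : β1 = if δ1 = 1 then α1 else 1 - α1)
    (hβ2 : β2 = if δ2 = 1 then α2 else 1 - α2)
    (hlam1 : lam1 = (1 - ε1) * α1 + ε1 * δ1) (hν1 : ν1 = (1 - ε1) * α1 + ε1 * (1 - δ1))
    (hlam2 : lam2 = (1 - ε2) * α2 + ε2 * δ2) (hν2 : ν2 = (1 - ε2) * α2 + ε2 * (1 - δ2))
    (hord : β1 ≤ β2)
    (hr : r = (if δ1 = δ2 then (1:ℝ) else -1) * ε1 * ε2 * β1 * (1 - β2))
    (p : ℕ → ℕ → ℝ)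
    (hp : ∀ h h', p h h' = ∫ u in (0:ℝ)..1,
      ((if u < β1 then lam1 else ν1) ^ h *
        (1 - (if u < β1 then lam1 else ν1)) ^ (1 - h)) *
      ((if u < β2 then lam2 else ν2) ^ h' *
        (1 - (if u < β2 then lam2 else ν2)) ^ (1 - h'))) :
    p 1 1 = α1 * α2 + r ∧
    p 0 1 = (1 - α1) * α2 - r ∧
    p 1 0 = α1 * (1 - α2) - r ∧
    p 0 0 = (1 - α1) * (1 - α2) + r := by
  have hβ1₀ : 0 ≤ β1 := by rw [hβ1]; exact (threshold_mem_Icc δ1 (Ioo_subset_Icc_self hα1)).1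
  have hβ2₁ : β2 ≤ 1 := by rw [hβ2]; exact (threshold_mem_Icc δ2 (Ioo_subset_Icc_self hα2)).2
  have hα1' : α1 = β1 * lam1 + (1 - β1) * ν1 := by
    rw [hβ1, hlam1, hν1]; exact (threshold_mul_lowerProb_add_mul_upperProb α1 ε1 hδ1).symm
  have hα2' : α2 = β2 * lam2 + (1 - β2) * ν2 := by
    rw [hβ2, hlam2, hν2]; exact (threshold_mul_lowerProb_add_mul_upperProb α2 ε2 hδ2).symm
  have hr' : r = β1 * (1 - β2) * ((lam1 - ν1) * (lam2 - ν2)) := by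
    rw [hr, hlam1, hν1, hlam2, hν2, ← two_mul_sub_one_mul_two_mul_sub_one hδ1 hδ2]; ring
  simp only [hp, pow_one, pow_zero, Nat.sub_self, Nat.sub_zero, one_mul, mul_one, sub_ite,
    integral_ite_lt_mul_ite_lt_s7 hβ1₀ hord hβ2₁]
  rw [hα1', hα2', hr']
  refine ⟨by ring, by ring, by ring, by ring⟩

/-- **Bivariate joint probabilities.**
For two variables of the same block of the one-factor binary model with `β₁ ≤ β₂`,
joint probabilities
`p h h' = ∫₀¹ p₁(u)^h (1-p₁(u))^(1-h) p₂(u)^{h'} (1-p₂(u))^(1-h') du` and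
`r = s ε₁ ε₂ β₁ (1-β₂)` with `s = 1` if `δ₁ = δ₂` and `s = -1` otherwise, one has
`p 1 1 = α₁α₂ + r`, `p 0 1 = (1-α₁)α₂ - r`, `p 1 0 = α₁(1-α₂) - r` and
`p 0 0 = (1-α₁)(1-α₂) + r`. -/
theorem bivariate_joint_probabilities
    (α1 ε1 δ1 α2 ε2 δ2 β1 β2 lam1 ν1 lam2 ν2 r : ℝ)
    (hα1 : α1 ∈ Set.Ioo (0:ℝ) 1) (hα2 : α2 ∈ Set.Ioo (0:ℝ) 1)
    (hε1 : ε1 ∈ Set.Ioo (0:ℝ) 1) (hε2 : ε2 ∈ Set.Ioo (0:ℝ) 1)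
    (hδ1 : δ1 = 0 ∨ δ1 = 1) (hδ2 : δ2 = 0 ∨ δ2 = 1)
    (hβ1 : β1 = if δ1 = 1 then α1 else 1 - α1)
    (hβ2 : β2 = if δ2 = 1 then α2 else 1 - α2)
    (hlam1 : lam1 = (1 - ε1) * α1 + ε1 * δ1) (hν1 : ν1 = (1 - ε1) * α1 + ε1 * (1 - δ1))
    (hlam2 : lam2 = (1 - ε2) * α2 + ε2 * δ2) (hν2 : ν2 = (1 - ε2) * α2 + ε2 * (1 - δ2))
    (hord : β1 ≤ β2)
    (hr : r = (if δ1 = δ2 then (1:ℝ) else -1) * ε1 * ε2 * β1 * (1 - β2))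
    (p : ℕ → ℕ → ℝ)
    (hp : ∀ h h', p h h' = ∫ u in (0:ℝ)..1,
      ((if u < β1 then lam1 else ν1) ^ h *
        (1 - (if u < β1 then lam1 else ν1)) ^ (1 - h)) *
      ((if u < β2 then lam2 else ν2) ^ h' *
        (1 - (if u < β2 then lam2 else ν2)) ^ (1 - h'))) :
    p 1 1 = α1 * α2 + r ∧
    p 0 1 = (1 - α1) * α2 - r ∧
    p 1 0 = α1 * (1 - α2) - r ∧
    p 0 0 = (1 - α1) * (1 - α2) + r :=
  bivariate_joint_probabilities_general α1 ε1 δ1 α2 ε2 δ2 β1 β2 lam1 ν1 lam2 ν2 r hα1 hα2 hδ1 hδ2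
    hβ1 hβ2 hlam1 hν1 hlam2 hν2 hord hr p hp
end

section
/- Case formula for the probability of the event (1,1): consider two variables j₁ and j₂ of the same block of the one-factor binary model with δ_{j₁} = 1, and let p₁₁ := ∫₀¹ p_{j₁}(u) p_{j₂}(u) du. Then: (i) if δ_{j₂} = 1 and α_{j₁} ≤ α_{j₂}, p₁₁ = α_{j₁}α_{j₂} + ε_{j₁}ε_{j₂}α_{j₁}(1−α_{j₂}); (ii) if δ_{j₂} = 0 and α_{j₁} + α_{j₂} < 1, p₁₁ = α_{j₁}α_{j₂} − ε_{j₁}ε_{j₂}α_{j₁}α_{j₂}; (iii) if δ_{j₂} = 0 and α_{j₁} + α_{j₂} ≥ 1, p₁₁ = α_{j₁}α_{j₂} − ε_{j₁}ε_{j₂}(1−α_{j₁})(1−α_{j₂}). -/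
/-!
Since `δ₁ = 1`, the integrand is the product of two step functions of `u` with jumps at `β₁ = α₁`
and at `β₂`. On each of the three intervals cut out of `[0, 1]` by the two thresholds it is
constant, so `p₁₁` is the length-weighted sum of those three constants. Here `β₂ = α₂` in case (i),
and `β₂ = 1 - α₂` in cases (ii) and (iii), where the order of the two thresholds decides which
formula comes out.
-/

open MeasureTheory intervalIntegral Set

section StepFunctions

variable {f : ℝ → ℝ} {l r c : ℝ}

lemma intervalIntegrable_of_eqOn_Ioo_const (hlr : l ≤ r) (h : (Ioo l r).EqOn f fun _ => c) :
    IntervalIntegrable f volume l r :=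
  (intervalIntegrable_congr_uIoo (uIoo_of_le hlr ▸ h)).2 intervalIntegrable_const

lemma integral_of_eqOn_Ioo_const (hlr : l ≤ r) (h : (Ioo l r).EqOn f fun _ => c) :
    ∫ u in l..r, f u = (r - l) * c := by
  rw [integral_congr_Ioo_of_le hlr h, intervalIntegral.integral_const, smul_eq_mul]

variable {a b : ℝ}

lemma integral_step_mul_step_of_le (c d e g : ℝ) (hla : l ≤ a) (hab : a ≤ b) (hbr : b ≤ r) :
    ∫ u in l..r, (if u < a then c else d) * (if u < b then e else g)
      = (a - l) * (c * e) + (b - a) * (d * e) + (r - b) * (d * g) := by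
  set F := fun u : ℝ => (if u < a then c else d) * (if u < b then e else g)
  have hF₁ : (Ioo l a).EqOn F fun _ => c * e := fun u hu => by
    simp only [F, if_pos hu.2, if_pos (hu.2.trans_le hab)]
  have hF₂ : (Ioo a b).EqOn F fun _ => d * e := fun u hu => by
    simp only [F, if_neg (not_lt.2 hu.1.le), if_pos hu.2]
  have hF₃ : (Ioo b r).EqOn F fun _ => d * g := fun u hu => by
    simp only [F, if_neg (not_lt.2 (hab.trans hu.1.le)), if_neg (not_lt.2 hu.1.le)]
  have hi₁ := intervalIntegrable_of_eqOn_Ioo_const hla hF₁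
  have hi₂ := intervalIntegrable_of_eqOn_Ioo_const hab hF₂
  have hi₃ := intervalIntegrable_of_eqOn_Ioo_const hbr hF₃
  rw [← integral_add_adjacent_intervals (hi₁.trans hi₂) hi₃,
    ← integral_add_adjacent_intervals hi₁ hi₂, integral_of_eqOn_Ioo_const hla hF₁,
    integral_of_eqOn_Ioo_const hab hF₂, integral_of_eqOn_Ioo_const hbr hF₃]

lemma integral_step_mul_step_of_ge (c d e g : ℝ) (hlb : l ≤ b) (hba : b ≤ a) (har : a ≤ r) :
    ∫ u in l..r, (if u < a then c else d) * (if u < b then e else g)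
      = (b - l) * (c * e) + (a - b) * (c * g) + (r - a) * (d * g) := by
  simp_rw [mul_comm (ite _ c d)]
  rw [integral_step_mul_step_of_le e g c d hlb hba har]
  ring

end StepFunctions

theorem prob_one_one_cases_general
    (α1 ε1 δ1 α2 ε2 δ2 β1 β2 lam1 ν1 lam2 ν2 p11 : ℝ)
    (hα1 : α1 ∈ Set.Ioo (0:ℝ) 1) (hα2 : α2 ∈ Set.Ioo (0:ℝ) 1)
    (hδ1 : δ1 = 1)
    (hβ1 : β1 = if δ1 = 1 then α1 else 1 - α1)
    (hβ2 : β2 = if δ2 = 1 then α2 else 1 - α2)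
    (hlam1 : lam1 = (1 - ε1) * α1 + ε1 * δ1) (hν1 : ν1 = (1 - ε1) * α1 + ε1 * (1 - δ1))
    (hlam2 : lam2 = (1 - ε2) * α2 + ε2 * δ2) (hν2 : ν2 = (1 - ε2) * α2 + ε2 * (1 - δ2))
    (hp11 : p11 = ∫ u in (0:ℝ)..1,
      (if u < β1 then lam1 else ν1) * (if u < β2 then lam2 else ν2)) :
    (δ2 = 1 → α1 ≤ α2 → p11 = α1 * α2 + ε1 * ε2 * α1 * (1 - α2)) ∧
    (δ2 = 0 → α1 + α2 < 1 → p11 = α1 * α2 - ε1 * ε2 * α1 * α2) ∧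
    (δ2 = 0 → 1 ≤ α1 + α2 → p11 = α1 * α2 - ε1 * ε2 * (1 - α1) * (1 - α2)) := by
  obtain ⟨hα1₀, hα1₁⟩ := hα1
  obtain ⟨hα2₀, hα2₁⟩ := hα2
  subst hδ1 hβ1 hβ2 hlam1 hν1 hlam2 hν2 hp11
  refine ⟨fun hδ2 hle => ?_, fun hδ2 hlt => ?_, fun hδ2 hge => ?_⟩ <;> subst hδ2
  · rw [if_pos rfl, if_pos rfl,
      integral_step_mul_step_of_le _ _ _ _ hα1₀.le hle hα2₁.le]
    ring
  · rw [if_pos rfl, if_neg zero_ne_one,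
      integral_step_mul_step_of_le _ _ _ _ hα1₀.le (by linarith) (by linarith)]
    ring
  · rw [if_pos rfl, if_neg zero_ne_one,
      integral_step_mul_step_of_ge _ _ _ _ (by linarith) (by linarith) hα1₁.le]
    ring

/-- **Case formula for the probability of the event `(1,1)`.**
For two variables of the same block of the one-factor binary model with `δ₁ = 1` and
`p₁₁ = ∫₀¹ p₁(u) p₂(u) du`:
(i) if `δ₂ = 1` and `α₁ ≤ α₂`, then `p₁₁ = α₁α₂ + ε₁ε₂α₁(1-α₂)`;
(ii) if `δ₂ = 0` and `α₁ + α₂ < 1`, then `p₁₁ = α₁α₂ - ε₁ε₂α₁α₂`;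
(iii) if `δ₂ = 0` and `α₁ + α₂ ≥ 1`, then `p₁₁ = α₁α₂ - ε₁ε₂(1-α₁)(1-α₂)`. -/
theorem prob_one_one_cases
    (α1 ε1 δ1 α2 ε2 δ2 β1 β2 lam1 ν1 lam2 ν2 p11 : ℝ)
    (hα1 : α1 ∈ Set.Ioo (0:ℝ) 1) (hα2 : α2 ∈ Set.Ioo (0:ℝ) 1)
    (hε1 : ε1 ∈ Set.Ioo (0:ℝ) 1) (hε2 : ε2 ∈ Set.Ioo (0:ℝ) 1)
    (hδ1 : δ1 = 1) (hδ2 : δ2 = 0 ∨ δ2 = 1)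
    (hβ1 : β1 = if δ1 = 1 then α1 else 1 - α1)
    (hβ2 : β2 = if δ2 = 1 then α2 else 1 - α2)
    (hlam1 : lam1 = (1 - ε1) * α1 + ε1 * δ1) (hν1 : ν1 = (1 - ε1) * α1 + ε1 * (1 - δ1))
    (hlam2 : lam2 = (1 - ε2) * α2 + ε2 * δ2) (hν2 : ν2 = (1 - ε2) * α2 + ε2 * (1 - δ2))
    (hp11 : p11 = ∫ u in (0:ℝ)..1,
      (if u < β1 then lam1 else ν1) * (if u < β2 then lam2 else ν2)) :
    (δ2 = 1 → α1 ≤ α2 → p11 = α1 * α2 + ε1 * ε2 * α1 * (1 - α2)) ∧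
    (δ2 = 0 → α1 + α2 < 1 → p11 = α1 * α2 - ε1 * ε2 * α1 * α2) ∧
    (δ2 = 0 → 1 ≤ α1 + α2 → p11 = α1 * α2 - ε1 * ε2 * (1 - α1) * (1 - α2)) :=
  prob_one_one_cases_general α1 ε1 δ1 α2 ε2 δ2 β1 β2 lam1 ν1 lam2 ν2 p11 hα1 hα2 hδ1 hβ1 hβ2 hlam1
    hν1 hlam2 hν2 hp11
end
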